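/- Let n ≥ 2 and let q : ℝⁿ → ℂ be a continuous function with compact support. If ∫_{ℝⁿ} q(x) v₁(x) v₂(x) v₃(x) dx = 0 for every triple of functions v₁, v₂, v₃ : ℝⁿ → ℂ that are harmonic on ℝⁿ, then q ≡ 0. -/

import Mathlib

open MeasureTheory
open scoped RealInnerProductSpace
open FourierTransform Real Complex

noncomputable def expL (n : ℕ) (c : Fin n → ℂ) : EuclideanSpace ℝ (Fin n) →L[ℝ] ℂ :=
  ∑ i : Fin n, c i • (Complex.ofRealCLM.comp (EuclideanSpace.proj i))

lemma expL_apply (n : ℕ) (c : Fin n → ℂ) (x : EuclideanSpace ℝ (Fin n)) :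
    expL n c x = ∑ i : Fin n, c i * (x i : ℂ) := by
  simp [expL, ContinuousLinearMap.sum_apply, mul_comm]

lemma expL_single (n : ℕ) (c : Fin n → ℂ) (i : Fin n) :
    expL n c (EuclideanSpace.single i (1 : ℝ)) = c i := by
  rw [expL_apply]
  rw [Finset.sum_eq_single i]
  · simp
  · intro j _ hj; simp [EuclideanSpace.single_apply, hj]
  · simp

lemma fderiv_cexp_L (n : ℕ) (c : Fin n → ℂ) (x : EuclideanSpace ℝ (Fin n)) :
    HasFDerivAt (fun y => Complex.exp (expL n c y)) (Complex.exp (expL n c x) • expL n c) x := by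
  have h1 : HasFDerivAt Complex.exp
      (((1 : ℂ →L[ℂ] ℂ).smulRight (Complex.exp (expL n c x))).restrictScalars ℝ) (expL n c x) :=
    (Complex.hasDerivAt_exp (expL n c x)).hasFDerivAt.restrictScalars ℝ
  have := h1.comp x (expL n c).hasFDerivAt
  refine this.congr_fderiv ?_
  ext v
  simp [mul_comm]

lemma isHarmonic_exp (n : ℕ) (c : Fin n → ℂ) (hc : ∑ i : Fin n, c i ^ 2 = 0) :
    ContDiff ℝ (⊤ : ℕ∞) (fun x : EuclideanSpace ℝ (Fin n) => Complex.exp (expL n c x)) ∧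
    ∀ x : EuclideanSpace ℝ (Fin n),
      ∑ i : Fin n, iteratedFDeriv ℝ 2 (fun y => Complex.exp (expL n c y)) x
        (fun _ => EuclideanSpace.single i (1 : ℝ)) = 0 := by
  constructor
  · exact (Complex.contDiff_exp (𝕜 := ℝ)).comp (expL n c).contDiff
  · intro x
    have hfd : fderiv ℝ (fun y => Complex.exp (expL n c y))
        = fun y => Complex.exp (expL n c y) • expL n c := by
      ext1 y
      exact (fderiv_cexp_L n c y).fderiv
    have h2 : ∀ v w : EuclideanSpace ℝ (Fin n),
        iteratedFDeriv ℝ 2 (fun y => Complex.exp (expL n c y)) x (fun j => if j = 0 then v else w)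
          = Complex.exp (expL n c x) * (expL n c v * expL n c w) := by
      intro v w
      rw [iteratedFDeriv_two_apply]
      simp only [hfd]
      have hg : HasFDerivAt (fun y => Complex.exp (expL n c y) • expL n c)
          ((Complex.exp (expL n c x) • expL n c).smulRight (expL n c)) x :=
        (fderiv_cexp_L n c x).smul_const (expL n c)
      rw [hg.fderiv]
      simp [mul_assoc, mul_comm, smul_eq_mul]
      ring
    have h3 : ∀ i : Fin n,
        iteratedFDeriv ℝ 2 (fun y => Complex.exp (expL n c y)) x
          (fun _ => EuclideanSpace.single i (1 : ℝ))
          = Complex.exp (expL n c x) * c i ^ 2 := by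
      intro i
      have := h2 (EuclideanSpace.single i (1 : ℝ)) (EuclideanSpace.single i (1 : ℝ))
      rw [show (fun j : Fin 2 => if j = 0 then EuclideanSpace.single i (1:ℝ)
          else EuclideanSpace.single i (1:ℝ)) = fun _ => EuclideanSpace.single i (1:ℝ) by
        funext j; split <;> rfl] at this
      rw [this, expL_single]; ring
    simp only [h3, ← Finset.mul_sum, hc, mul_zero]

lemma isHarmonic_one (n : ℕ) :
    ContDiff ℝ (⊤ : ℕ∞) (fun _ : EuclideanSpace ℝ (Fin n) => (1 : ℂ)) ∧
    ∀ x : EuclideanSpace ℝ (Fin n),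
      ∑ i : Fin n, iteratedFDeriv ℝ 2 (fun _ => (1:ℂ)) x
        (fun _ => EuclideanSpace.single i (1 : ℝ)) = 0 := by
  refine ⟨contDiff_const, fun x => ?_⟩
  have : iteratedFDeriv ℝ 2 (fun _ : EuclideanSpace ℝ (Fin n) => (1:ℂ)) x = 0 :=
    congrFun (iteratedFDeriv_const_of_ne (by norm_num) (1:ℂ)) x
  simp [this]

lemma exists_orth (n : ℕ) (hn : 2 ≤ n) (ξ : EuclideanSpace ℝ (Fin n)) :
    ∃ b : EuclideanSpace ℝ (Fin n), ⟪b, ξ⟫ = 0 ∧ ‖b‖ = ‖ξ‖ := by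
  by_cases hξ : ξ = 0
  · exact ⟨0, by simp, by simp [hξ]⟩
  · have hne : (ℝ ∙ ξ)ᗮ ≠ ⊥ := by
      intro hbot
      have htop := Submodule.orthogonal_eq_bot_iff.mp hbot
      have h1 : Module.finrank ℝ (ℝ ∙ ξ) = 1 := finrank_span_singleton hξ
      have h2 : Module.finrank ℝ (EuclideanSpace ℝ (Fin n)) = n := finrank_euclideanSpace_fin
      rw [htop, finrank_top, h2] at h1
      omega
    obtain ⟨u, hu, hu0⟩ := Submodule.exists_mem_ne_zero_of_ne_bot hne
    have huξ : ⟪u, ξ⟫ = 0 := by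
      rw [real_inner_comm]
      exact (Submodule.mem_orthogonal _ u).mp hu ξ (Submodule.mem_span_singleton_self ξ)
    refine ⟨(‖ξ‖ / ‖u‖) • u, ?_, ?_⟩
    · rw [real_inner_smul_left, huξ, mul_zero]
    · rw [norm_smul, Real.norm_eq_abs, abs_div, abs_norm, abs_norm,
        div_mul_cancel₀ _ (norm_ne_zero_iff.mpr hu0)]

/-- A function on `ℝⁿ` (as `EuclideanSpace ℝ (Fin n)`) is harmonic if it is smooth and the sum of
its pure second partial derivatives (the Laplacian) vanishes at every point. -/
def IsHarmonicOn (n : ℕ) (v : EuclideanSpace ℝ (Fin n) → ℂ) : Prop :=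
  ContDiff ℝ (⊤ : ℕ∞) v ∧ ∀ x : EuclideanSpace ℝ (Fin n),
    ∑ i : Fin n, iteratedFDeriv ℝ 2 v x (fun _ => EuclideanSpace.single i (1 : ℝ)) = 0

theorem stmt_2 (n : ℕ) (hn : 2 ≤ n) (q : EuclideanSpace ℝ (Fin n) → ℂ)
    (hq_cont : Continuous q) (hq_supp : HasCompactSupport q)
    (h : ∀ v₁ v₂ v₃ : EuclideanSpace ℝ (Fin n) → ℂ,
      IsHarmonicOn n v₁ → IsHarmonicOn n v₂ → IsHarmonicOn n v₃ →
      ∫ x, q x * v₁ x * v₂ x * v₃ x = 0) :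
    ∀ x, q x = 0 := by
  have hq_int : Integrable q := hq_cont.integrable_of_hasCompactSupport hq_supp
  have hF : 𝓕 q = 0 := by
    funext ξ
    obtain ⟨b, hb1, hb2⟩ := exists_orth n hn ξ
    set c₁ : Fin n → ℂ := fun i => (π : ℂ) * ((b i : ℂ) - (ξ i : ℂ) * Complex.I) with hc₁def
    set c₂ : Fin n → ℂ := fun i => (π : ℂ) * (-(b i : ℂ) - (ξ i : ℂ) * Complex.I) with hc₂def
    have hmixR : ∑ i, b i * ξ i = 0 := by
      simpa [PiLp.inner_apply, RCLike.inner_apply, conj_trivial, mul_comm] using hb1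
    have hmix : ∑ i : Fin n, (b i : ℂ) * (ξ i : ℂ) = 0 := by
      have h3 := congrArg (fun r : ℝ => (r : ℂ)) hmixR
      push_cast at h3
      simpa using h3
    have hbbR : ∑ i, b i * b i = ∑ i, ξ i * ξ i := by
      have h1 : ⟪b, b⟫ = ⟪ξ, ξ⟫ := by
        rw [real_inner_self_eq_norm_sq, real_inner_self_eq_norm_sq, hb2]
      simp only [PiLp.inner_apply, RCLike.inner_apply, conj_trivial] at h1
      exact h1
    have hbb : ∑ i : Fin n, (b i : ℂ) ^ 2 = ∑ i : Fin n, (ξ i : ℂ) ^ 2 := by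
      have h3 := congrArg (fun r : ℝ => (r : ℂ)) hbbR
      push_cast at h3
      simpa [pow_two] using h3
    have hz₁ : ∑ i : Fin n, c₁ i ^ 2 = 0 := by
      have e : ∀ i ∈ Finset.univ, c₁ i ^ 2 = (π:ℂ)^2 * (b i:ℂ)^2 - (π:ℂ)^2 * (ξ i:ℂ)^2
          - (2*(π:ℂ)^2*Complex.I) * ((b i:ℂ)*(ξ i:ℂ)) := by
        intro i _
        simp only [hc₁def]
        linear_combination (π:ℂ)^2 * (ξ i:ℂ)^2 * Complex.I_sq
      rw [Finset.sum_congr rfl e, Finset.sum_sub_distrib, Finset.sum_sub_distrib,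
        ← Finset.mul_sum, ← Finset.mul_sum, ← Finset.mul_sum, hbb, hmix, mul_zero, sub_zero,
        sub_self]
    have hz₂ : ∑ i : Fin n, c₂ i ^ 2 = 0 := by
      have e : ∀ i ∈ Finset.univ, c₂ i ^ 2 = (π:ℂ)^2 * (b i:ℂ)^2 - (π:ℂ)^2 * (ξ i:ℂ)^2
          + (2*(π:ℂ)^2*Complex.I) * ((b i:ℂ)*(ξ i:ℂ)) := by
        intro i _
        simp only [hc₂def]
        linear_combination (π:ℂ)^2 * (ξ i:ℂ)^2 * Complex.I_sq
      rw [Finset.sum_congr rfl e, Finset.sum_add_distrib, Finset.sum_sub_distrib,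
        ← Finset.mul_sum, ← Finset.mul_sum, ← Finset.mul_sum, hbb, hmix, mul_zero, add_zero,
        sub_self]
    have h0 : ∫ x, q x * Complex.exp (expL n c₁ x) * Complex.exp (expL n c₂ x) * 1 = 0 :=
      h _ _ _ (isHarmonic_exp n c₁ hz₁) (isHarmonic_exp n c₂ hz₂) (isHarmonic_one n)
    have hker : ∀ x : EuclideanSpace ℝ (Fin n),
        Complex.exp (↑(-2 * π * ⟪x, ξ⟫) * Complex.I) • q x
          = q x * Complex.exp (expL n c₁ x) * Complex.exp (expL n c₂ x) * 1 := by
      intro x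
      have hsum : expL n c₁ x + expL n c₂ x = ((-2 * π * ⟪x, ξ⟫ : ℝ) : ℂ) * Complex.I := by
        rw [expL_apply, expL_apply, ← Finset.sum_add_distrib]
        have e : ∀ i ∈ Finset.univ, c₁ i * (x i : ℂ) + c₂ i * (x i : ℂ)
            = (-2*(π:ℂ)) * ((x i:ℂ) * (ξ i:ℂ)) * Complex.I := by
          intro i _
          simp only [hc₁def, hc₂def]
          ring
        rw [Finset.sum_congr rfl e, ← Finset.sum_mul, ← Finset.mul_sum]
        have hxi : ⟪x, ξ⟫ = ∑ i, x i * ξ i := by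
          simp [PiLp.inner_apply, RCLike.inner_apply, conj_trivial, mul_comm]
        rw [hxi]
        push_cast
        ring
      have hee : Complex.exp (↑(-2 * π * ⟪x, ξ⟫) * Complex.I)
          = Complex.exp (expL n c₁ x) * Complex.exp (expL n c₂ x) := by
        rw [← Complex.exp_add, hsum]
      rw [smul_eq_mul, hee, mul_one]
      ring
    calc 𝓕 q ξ = ∫ x, q x * Complex.exp (expL n c₁ x) * Complex.exp (expL n c₂ x) * 1 := by
          rw [Real.fourier_eq']
          exact integral_congr_ae (Filter.Eventually.of_forall hker)
      _ = 0 := h0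
  have hFi : Integrable (𝓕 q) := by rw [hF]; exact integrable_zero _ _ _
  have hinv := hq_cont.fourierInv_fourier_eq hq_int hFi
  rw [hF] at hinv
  intro x
  rw [← hinv]
  simp [Real.fourierInv_eq]
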